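/- Let CNOT denote the unitary matrix indexed by Fin 2 × Fin 2 with entries CNOT (a,b) (a',b') = 1 if a = a' and b = a' + b' (addition in Fin 2 = ZMod 2), and 0 otherwise. Then for every unitary matrix U indexed by Fin 2 × Fin 2 with complex entries, there exists a finite list L of matrices indexed by Fin 2 × Fin 2, each element of which is either A ⊗ 1₂ for some unitary 2×2 matrix A, or 1₂ ⊗ B for some unitary 2×2 matrix B, or CNOT, such that the product of the elements of L equals U. (This is the universality fact the paper relies on in the proof of Theorem 1: 'arbitrary single qubit operations, coupled with c-NOT gates on adjacent qubits, is universal for quantum computation', specialized to the exact decomposition of an arbitrary two-qubit unitary.) -/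

import Mathlib

open Matrix

/-- Kronecker product of two 2×2 matrices. -/
def kron (A B : Matrix (Fin 2) (Fin 2) ℂ) :
    Matrix (Fin 2 × Fin 2) (Fin 2 × Fin 2) ℂ :=
  fun p q => A p.1 q.1 * B p.2 q.2

/-- The controlled-NOT gate on two qubits. -/
def CNOT : Matrix (Fin 2 × Fin 2) (Fin 2 × Fin 2) ℂ :=
  fun p q => if p.1 = q.1 ∧ p.2 = q.1 + q.2 then 1 else 0

open scoped ComplexConjugate

/-- The predicate: M is a product of allowed gates. -/
def Pg (M : Matrix (Fin 2 × Fin 2) (Fin 2 × Fin 2) ℂ) : Prop :=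
  ∃ L : List (Matrix (Fin 2 × Fin 2) (Fin 2 × Fin 2) ℂ),
    (∀ N ∈ L,
      (∃ A : Matrix (Fin 2) (Fin 2) ℂ, Aᴴ * A = 1 ∧ N = kron A 1) ∨
      (∃ B : Matrix (Fin 2) (Fin 2) ℂ, Bᴴ * B = 1 ∧ N = kron 1 B) ∨
      N = CNOT) ∧
    L.prod = M

lemma Pg_mul {M N} (hM : Pg M) (hN : Pg N) : Pg (M * N) := by
  obtain ⟨L1, h1, e1⟩ := hM
  obtain ⟨L2, h2, e2⟩ := hN
  exact ⟨L1 ++ L2, by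
    intro K hK
    rcases List.mem_append.mp hK with h | h
    · exact h1 K h
    · exact h2 K h, by rw [List.prod_append, e1, e2]⟩

lemma Pg_kronL (A : Matrix (Fin 2) (Fin 2) ℂ) (hA : Aᴴ * A = 1) : Pg (kron A 1) :=
  ⟨[kron A 1], by intro N hN; rw [List.mem_singleton] at hN; subst hN; exact Or.inl ⟨A, hA, rfl⟩, by simp⟩

lemma Pg_kronR (B : Matrix (Fin 2) (Fin 2) ℂ) (hB : Bᴴ * B = 1) : Pg (kron 1 B) :=
  ⟨[kron 1 B], by intro N hN; rw [List.mem_singleton] at hN; subst hN; exact Or.inr (Or.inl ⟨B, hB, rfl⟩), by simp⟩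

lemma Pg_CNOT : Pg CNOT := ⟨[CNOT], by intro N hN; rw [List.mem_singleton] at hN; subst hN; exact Or.inr (Or.inr rfl), by simp⟩

/-- controlled-V, control = first qubit. -/
def Cg (V : Matrix (Fin 2) (Fin 2) ℂ) : Matrix (Fin 2 × Fin 2) (Fin 2 × Fin 2) ℂ :=
  fun p q => if p.1 = 1 ∧ q.1 = 1 then V p.2 q.2 else if p = q then 1 else 0

def T01 (V : Matrix (Fin 2) (Fin 2) ℂ) : Matrix (Fin 2 × Fin 2) (Fin 2 × Fin 2) ℂ :=
  fun p q => if p.1 = 0 ∧ q.1 = 0 then V p.2 q.2 else if p = q then 1 else 0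

def T13 (V : Matrix (Fin 2) (Fin 2) ℂ) : Matrix (Fin 2 × Fin 2) (Fin 2 × Fin 2) ℂ :=
  fun p q => if p.2 = 1 ∧ q.2 = 1 then V p.1 q.1 else if p = q then 1 else 0

def T02 (V : Matrix (Fin 2) (Fin 2) ℂ) : Matrix (Fin 2 × Fin 2) (Fin 2 × Fin 2) ℂ :=
  fun p q => if p.2 = 0 ∧ q.2 = 0 then V p.1 q.1 else if p = q then 1 else 0

def SWAP : Matrix (Fin 2 × Fin 2) (Fin 2 × Fin 2) ℂ :=
  fun p q => if p.1 = q.2 ∧ p.2 = q.1 then 1 else 0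

def rC : Matrix (Fin 2 × Fin 2) (Fin 2 × Fin 2) ℂ :=
  fun p q => if p.2 = q.2 ∧ p.1 = q.1 + q.2 then 1 else 0

section comput
set_option maxHeartbeats 1000000

lemma kron_mul_kron (A B : Matrix (Fin 2) (Fin 2) ℂ) : kron A 1 * kron 1 B = kron A B := by
  ext ⟨a,b⟩ ⟨c,d⟩
  fin_cases a <;> fin_cases b <;> fin_cases c <;> fin_cases d <;>
    simp [kron, Matrix.mul_apply, Fintype.sum_prod_type, Fin.sum_univ_two,
      Matrix.one_apply, Prod.ext_iff]

lemma Cg_mul (V W : Matrix (Fin 2) (Fin 2) ℂ) : Cg V * Cg W = Cg (V * W) := by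
  ext ⟨a,b⟩ ⟨c,d⟩
  fin_cases a <;> fin_cases b <;> fin_cases c <;> fin_cases d <;>
    simp [Cg, Matrix.mul_apply, Fintype.sum_prod_type, Fin.sum_univ_two, Prod.ext_iff]

lemma T01_mul (V W : Matrix (Fin 2) (Fin 2) ℂ) : T01 V * T01 W = T01 (V * W) := by
  ext ⟨a,b⟩ ⟨c,d⟩
  fin_cases a <;> fin_cases b <;> fin_cases c <;> fin_cases d <;>
    simp [T01, Matrix.mul_apply, Fintype.sum_prod_type, Fin.sum_univ_two, Prod.ext_iff]

lemma T13_mul (V W : Matrix (Fin 2) (Fin 2) ℂ) : T13 V * T13 W = T13 (V * W) := by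
  ext ⟨a,b⟩ ⟨c,d⟩
  fin_cases a <;> fin_cases b <;> fin_cases c <;> fin_cases d <;>
    simp [T13, Matrix.mul_apply, Fintype.sum_prod_type, Fin.sum_univ_two, Prod.ext_iff]

lemma T02_mul (V W : Matrix (Fin 2) (Fin 2) ℂ) : T02 V * T02 W = T02 (V * W) := by
  ext ⟨a,b⟩ ⟨c,d⟩
  fin_cases a <;> fin_cases b <;> fin_cases c <;> fin_cases d <;>
    simp [T02, Matrix.mul_apply, Fintype.sum_prod_type, Fin.sum_univ_two, Prod.ext_iff]

lemma Cg_one : Cg 1 = 1 := by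
  ext ⟨a,b⟩ ⟨c,d⟩
  fin_cases a <;> fin_cases b <;> fin_cases c <;> fin_cases d <;>
    simp [Cg, Matrix.one_apply, Prod.ext_iff]

lemma T01_one : T01 1 = 1 := by
  ext ⟨a,b⟩ ⟨c,d⟩
  fin_cases a <;> fin_cases b <;> fin_cases c <;> fin_cases d <;>
    simp [T01, Matrix.one_apply, Prod.ext_iff]

lemma T13_one : T13 1 = 1 := by
  ext ⟨a,b⟩ ⟨c,d⟩
  fin_cases a <;> fin_cases b <;> fin_cases c <;> fin_cases d <;>
    simp [T13, Matrix.one_apply, Prod.ext_iff]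

lemma T02_one : T02 1 = 1 := by
  ext ⟨a,b⟩ ⟨c,d⟩
  fin_cases a <;> fin_cases b <;> fin_cases c <;> fin_cases d <;>
    simp [T02, Matrix.one_apply, Prod.ext_iff]

lemma Cg_adj (V : Matrix (Fin 2) (Fin 2) ℂ) : (Cg V)ᴴ = Cg Vᴴ := by
  ext ⟨a,b⟩ ⟨c,d⟩
  fin_cases a <;> fin_cases b <;> fin_cases c <;> fin_cases d <;>
    simp [Cg, Matrix.conjTranspose_apply, Prod.ext_iff]

lemma T01_adj (V : Matrix (Fin 2) (Fin 2) ℂ) : (T01 V)ᴴ = T01 Vᴴ := by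
  ext ⟨a,b⟩ ⟨c,d⟩
  fin_cases a <;> fin_cases b <;> fin_cases c <;> fin_cases d <;>
    simp [T01, Matrix.conjTranspose_apply, Prod.ext_iff]

lemma T13_adj (V : Matrix (Fin 2) (Fin 2) ℂ) : (T13 V)ᴴ = T13 Vᴴ := by
  ext ⟨a,b⟩ ⟨c,d⟩
  fin_cases a <;> fin_cases b <;> fin_cases c <;> fin_cases d <;>
    simp [T13, Matrix.conjTranspose_apply, Prod.ext_iff]

lemma T02_adj (V : Matrix (Fin 2) (Fin 2) ℂ) : (T02 V)ᴴ = T02 Vᴴ := by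
  ext ⟨a,b⟩ ⟨c,d⟩
  fin_cases a <;> fin_cases b <;> fin_cases c <;> fin_cases d <;>
    simp [T02, Matrix.conjTranspose_apply, Prod.ext_iff]

lemma Cg_T01_comm (F G : Matrix (Fin 2) (Fin 2) ℂ) : Cg G * T01 F = T01 F * Cg G := by
  ext ⟨a,b⟩ ⟨c,d⟩
  fin_cases a <;> fin_cases b <;> fin_cases c <;> fin_cases d <;>
    simp [Cg, T01, Matrix.mul_apply, Fintype.sum_prod_type, Fin.sum_univ_two, Prod.ext_iff]

lemma kron_one_eq (A : Matrix (Fin 2) (Fin 2) ℂ) : kron 1 A = T01 A * Cg A := by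
  ext ⟨a,b⟩ ⟨c,d⟩
  fin_cases a <;> fin_cases b <;> fin_cases c <;> fin_cases d <;>
    simp [kron, Cg, T01, Matrix.mul_apply, Fintype.sum_prod_type, Fin.sum_univ_two,
      Matrix.one_apply, Prod.ext_iff]

lemma CNOT_eq_Cg : CNOT = Cg !![0,1;1,0] := by
  ext ⟨a,b⟩ ⟨c,d⟩
  fin_cases a <;> fin_cases b <;> fin_cases c <;> fin_cases d <;>
    simp [Cg, CNOT, Prod.ext_iff]

lemma kron_phase (w : ℂ) : kron !![1,0;0,w] 1 = Cg (w • (1 : Matrix (Fin 2) (Fin 2) ℂ)) := by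
  ext ⟨a,b⟩ ⟨c,d⟩
  fin_cases a <;> fin_cases b <;> fin_cases c <;> fin_cases d <;>
    simp [kron, Cg, Matrix.one_apply, Prod.ext_iff]

end comput
section abc
set_option maxHeartbeats 1600000

lemma DD (F1 G1 F2 G2 : Matrix (Fin 2) (Fin 2) ℂ) :
    (T01 F1 * Cg G1) * (T01 F2 * Cg G2) = T01 (F1 * F2) * Cg (G1 * G2) := by
  calc (T01 F1 * Cg G1) * (T01 F2 * Cg G2)
      = T01 F1 * ((Cg G1 * T01 F2) * Cg G2) := by rw [mul_assoc, mul_assoc]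
    _ = T01 F1 * ((T01 F2 * Cg G1) * Cg G2) := by rw [Cg_T01_comm]
    _ = (T01 F1 * T01 F2) * (Cg G1 * Cg G2) := by rw [mul_assoc, mul_assoc]
    _ = T01 (F1 * F2) * Cg (G1 * G2) := by rw [T01_mul, Cg_mul]

lemma abc_core (p q t w c' s' : ℂ)
    (hp : p * conj p = 1) (hq : q * conj q = 1) (ht : t * conj t = 1)
    (hw : w * conj w = 1) (hw2 : w ^ 2 = p * q * t)
    (hc' : conj c' = c') (hs' : conj s' = s') (hcs : c' ^ 2 + s' ^ 2 = 1) :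
    Pg (Cg !![p * (c'^2 - s'^2), -(p * (2*c'*s') * t);
              q * (2*c'*s'), q * (c'^2 - s'^2) * t]) := by
  set Vp : Matrix (Fin 2) (Fin 2) ℂ :=
    !![p * (c'^2 - s'^2), -(p * (2*c'*s') * t); q * (2*c'*s'), q * (c'^2 - s'^2) * t] with hVp
  set A : Matrix (Fin 2) (Fin 2) ℂ := !![p*c', -(p*s'); q*s', q*c'] with hA
  set B : Matrix (Fin 2) (Fin 2) ℂ :=
    !![c' * (t*q*conj w), s'; -(s' * (t*q*conj w)), c'] with hB
  set Cm : Matrix (Fin 2) (Fin 2) ℂ :=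
    !![conj t * conj q * w * conj p, 0; 0, conj q] with hCm
  set Ph : Matrix (Fin 2) (Fin 2) ℂ := !![1, 0; 0, w] with hPh
  set X : Matrix (Fin 2) (Fin 2) ℂ := !![0, 1; 1, 0] with hX
  have hAu : Aᴴ * A = 1 := by
    ext i j
    fin_cases i <;> fin_cases j <;>
      simp [hA, Matrix.conjTranspose_apply, Matrix.mul_apply, Fin.sum_univ_two,
        Matrix.one_apply, _root_.map_mul, hc', hs']
    · linear_combination c'^2 * hp + s'^2 * hq + hcs
    · linear_combination (-(c'*s')) * hp + c'*s' * hq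
    · linear_combination (-(c'*s')) * hp + c'*s' * hq
    · linear_combination s'^2 * hp + c'^2 * hq + hcs
  have hBu : Bᴴ * B = 1 := by
    ext i j
    fin_cases i <;> fin_cases j <;>
      simp [hB, Matrix.conjTranspose_apply, Matrix.mul_apply, Fin.sum_univ_two,
        Matrix.one_apply, _root_.map_mul, hc', hs', Complex.conj_conj]
    · linear_combination (t*conj t*q*conj q*w*conj w) * hcs + (q*conj q*w*conj w) * ht
        + (w*conj w) * hq + hw
    · ring
    · ring
    · linear_combination hcs
  have hCu : Cmᴴ * Cm = 1 := by
    ext i j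
    fin_cases i <;> fin_cases j <;>
      simp [hCm, Matrix.conjTranspose_apply, Matrix.mul_apply, Fin.sum_univ_two,
        Matrix.one_apply, _root_.map_mul, Complex.conj_conj]
    · linear_combination (q*conj q*w*conj w*p*conj p) * ht + (w*conj w*p*conj p) * hq
        + (p*conj p) * hw + hp
    · linear_combination hq
  have hPhu : Phᴴ * Ph = 1 := by
    ext i j
    fin_cases i <;> fin_cases j <;>
      simp [hPh, Matrix.conjTranspose_apply, Matrix.mul_apply, Fin.sum_univ_two,
        Matrix.one_apply]
    linear_combination hw
  have hXu : Xᴴ * X = 1 := by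
    ext i j
    fin_cases i <;> fin_cases j <;>
      simp [hX, Matrix.conjTranspose_apply, Matrix.mul_apply, Fin.sum_univ_two,
        Matrix.one_apply]
  have hABC : A * (B * Cm) = 1 := by
    ext i j
    fin_cases i <;> fin_cases j <;>
      simp [hA, hB, hCm, Matrix.mul_apply, Fin.sum_univ_two, Matrix.one_apply]
    · linear_combination (p*conj p*t*conj t*q*conj q*w*conj w) * hcs
        + (t*conj t*q*conj q*w*conj w) * hp + (q*conj q*w*conj w) * ht + (w*conj w) * hq + hw
    · ring
    · ring
    · linear_combination (q*conj q) * hcs + hq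
  have hAX : w • (A * (X * (B * (X * Cm)))) = Vp := by
    ext i j
    fin_cases i <;> fin_cases j <;>
      simp [hA, hB, hCm, hX, hVp, Matrix.mul_apply, Matrix.smul_apply, smul_eq_mul,
        Fin.sum_univ_two]
    · linear_combination (p*(c'^2-s'^2)*conj t*conj q*conj p) * hw2
        + (p*(c'^2-s'^2)*q*conj q*t*conj t) * hp + (p*(c'^2-s'^2)*t*conj t) * hq
        + (p*(c'^2-s'^2)) * ht
    · linear_combination (-2*p*c'*s'*t*w*conj w) * hq + (-2*p*c'*s'*t) * hw
    · linear_combination (2*q*c'*s'*conj t*conj q*conj p) * hw2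
        + (2*q*c'*s'*q*conj q*t*conj t) * hp + (2*q*c'*s'*t*conj t) * hq + (2*q*c'*s') * ht
    · linear_combination (q*(c'^2-s'^2)*t*w*conj w) * hq + (q*(c'^2-s'^2)*t) * hw
  have key : kron Ph 1 * (kron 1 A * (CNOT * (kron 1 B * (CNOT * kron 1 Cm)))) = Cg Vp := by
    rw [kron_phase, kron_one_eq, kron_one_eq, kron_one_eq, CNOT_eq_Cg, ← hX]
    have h1 : Cg (w • (1 : Matrix (Fin 2) (Fin 2) ℂ)) = T01 1 * Cg (w • 1) := by
      rw [T01_one, one_mul]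
    have h2 : Cg X = T01 1 * Cg X := by rw [T01_one, one_mul]
    rw [h1, h2, DD, DD, DD, DD, DD]
    have hT : (1 : Matrix (Fin 2) (Fin 2) ℂ) * (A * (1 * (B * (1 * Cm)))) = 1 := by
      simpa using hABC
    have hC : w • (1 : Matrix (Fin 2) (Fin 2) ℂ) * (A * (X * (B * (X * Cm)))) = Vp := by
      rw [Matrix.smul_mul, one_mul]; exact hAX
    rw [hT, hC, T01_one, one_mul]
  refine ⟨[kron Ph 1, kron 1 A, CNOT, kron 1 B, CNOT, kron 1 Cm], ?_, ?_⟩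
  · intro N hN
    fin_cases hN
    · exact Or.inl ⟨Ph, hPhu, rfl⟩
    · exact Or.inr (Or.inl ⟨A, hAu, rfl⟩)
    · exact Or.inr (Or.inr rfl)
    · exact Or.inr (Or.inl ⟨B, hBu, rfl⟩)
    · exact Or.inr (Or.inr rfl)
    · exact Or.inr (Or.inl ⟨Cm, hCu, rfl⟩)
  · simpa [List.prod_cons, mul_assoc] using key

end abc
section euler
set_option maxHeartbeats 1600000

lemma entry_simp : True := trivial

lemma euler (V : Matrix (Fin 2) (Fin 2) ℂ) (hV : Vᴴ * V = 1) :
    ∃ (p q t : ℂ) (θ : ℝ), p * conj p = 1 ∧ q * conj q = 1 ∧ t * conj t = 1 ∧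
      V = !![p * Real.cos θ, -(p * Real.sin θ * t);
             q * Real.sin θ, q * Real.cos θ * t] := by
  have h00 : conj (V 0 0) * V 0 0 + conj (V 1 0) * V 1 0 = 1 := by
    have := congrFun (congrFun hV 0) 0
    simpa [Matrix.mul_apply, Matrix.conjTranspose_apply, Fin.sum_univ_two,
      Matrix.one_apply] using this
  have h01 : conj (V 0 0) * V 0 1 + conj (V 1 0) * V 1 1 = 0 := by
    have := congrFun (congrFun hV 0) 1
    simpa [Matrix.mul_apply, Matrix.conjTranspose_apply, Fin.sum_univ_two,
      Matrix.one_apply] using this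
  have h11 : conj (V 0 1) * V 0 1 + conj (V 1 1) * V 1 1 = 1 := by
    have := congrFun (congrFun hV 1) 1
    simpa [Matrix.mul_apply, Matrix.conjTranspose_apply, Fin.sum_univ_two,
      Matrix.one_apply] using this
  set a := V 0 0 with ha
  set b := V 0 1 with hb
  set c := V 1 0 with hc
  set d := V 1 1 with hd
  have hr : Complex.normSq a + Complex.normSq c = 1 := by
    have : ((Complex.normSq a + Complex.normSq c : ℝ) : ℂ) = 1 := by
      push_cast
      rw [← Complex.mul_conj, ← Complex.mul_conj]
      linear_combination h00
    exact_mod_cast this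
  have habs : ‖c‖ ≤ 1 := by
    nlinarith [Complex.sq_norm c, Complex.normSq_nonneg a, norm_nonneg c]
  set θ := Real.arcsin (‖c‖) with hθ
  have hsin : Real.sin θ = ‖c‖ :=
    Real.sin_arcsin (by linarith [norm_nonneg c]) habs
  have hcos : Real.cos θ = ‖a‖ := by
    rw [hθ, Real.cos_arcsin]
    rw [show 1 - ‖c‖ ^ 2 = ‖a‖ ^ 2 by
      rw [Complex.sq_norm, Complex.sq_norm]; linarith]
    exact Real.sqrt_sq (norm_nonneg a)
  set p : ℂ := if a = 0 then 1 else a / ((‖a‖ : ℝ) : ℂ) with hp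
  set q : ℂ := if c = 0 then 1 else c / ((‖c‖ : ℝ) : ℂ) with hq
  have hpu : p * conj p = 1 := by
    by_cases h : a = 0
    · simp [hp, h]
    · have hne : ((‖a‖ : ℝ) : ℂ) ≠ 0 := by
        simpa using norm_ne_zero_iff.mpr h
      rw [hp, if_neg h, map_div₀, Complex.conj_ofReal]
      field_simp
      rw [Complex.mul_conj, Complex.normSq_eq_norm_sq]
      push_cast
      ring
  have hqu : q * conj q = 1 := by
    by_cases h : c = 0
    · simp [hq, h]
    · have hne : ((‖c‖ : ℝ) : ℂ) ≠ 0 := by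
        simpa using norm_ne_zero_iff.mpr h
      rw [hq, if_neg h, map_div₀, Complex.conj_ofReal]
      field_simp
      rw [Complex.mul_conj, Complex.normSq_eq_norm_sq]
      push_cast
      ring
  have hpa : a = p * (Real.cos θ : ℂ) := by
    rw [hcos]
    by_cases h : a = 0
    · simp [hp, h]
    · rw [hp, if_neg h]
      have hne : ((‖a‖ : ℝ) : ℂ) ≠ 0 := by
        simpa using norm_ne_zero_iff.mpr h
      field_simp
  have hqc : c = q * (Real.sin θ : ℂ) := by
    rw [hsin]
    by_cases h : c = 0
    · simp [hq, h]
    · rw [hq, if_neg h]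
      have hne : ((‖c‖ : ℝ) : ℂ) ≠ 0 := by
        simpa using norm_ne_zero_iff.mpr h
      field_simp
  set cθ : ℂ := ((Real.cos θ : ℝ) : ℂ) with hcθ
  set sθ : ℂ := ((Real.sin θ : ℝ) : ℂ) with hsθ
  have hconjc : conj cθ = cθ := by rw [hcθ]; exact Complex.conj_ofReal _
  have hconjs : conj sθ = sθ := by rw [hsθ]; exact Complex.conj_ofReal _
  have hsc : sθ ^ 2 + cθ ^ 2 = 1 := by
    rw [hsθ, hcθ]
    exact_mod_cast Real.sin_sq_add_cos_sq θ
  by_cases hczero : c = 0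
  · -- sin θ = 0, q = 1, cos θ = 1
    have hs0 : Real.sin θ = 0 := by rw [hsin, hczero]; simp
    have hsθ0 : sθ = 0 := by rw [hsθ, hs0]; simp
    have hna : Complex.normSq a = 1 := by
      have : Complex.normSq c = 0 := by rw [hczero]; simp
      linarith
    have ha0 : a ≠ 0 := by
      intro h; rw [h] at hna; simp at hna
    have hc1 : Real.cos θ = 1 := by
      rw [hcos, Complex.norm_def, hna, Real.sqrt_one]
    have hcθ1 : cθ = 1 := by rw [hcθ, hc1]; simp
    have hq1 : q = 1 := by rw [hq, if_pos hczero]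
    have hb0 : b = 0 := by
      have h2 := h01
      rw [hczero] at h2
      simp at h2
      rcases h2 with h | h
      · exact absurd (by simpa using congrArg (starRingEnd ℂ) h) ha0
      · exact h
    refine ⟨p, q, d, θ, hpu, hqu, ?_, ?_⟩
    · have h2 := h11
      rw [hb0] at h2
      simp at h2
      rw [mul_comm]
      exact h2
    · ext i j
      fin_cases i <;> fin_cases j <;>
        simp only [Matrix.of_apply, Matrix.cons_val', Matrix.cons_val_zero,
          Matrix.cons_val_one, Matrix.head_cons, Matrix.head_fin_const,
          Matrix.empty_val', Matrix.cons_val_fin_one]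
      · exact hpa
      · show b = -(p * sθ * d); rw [hb0, hsθ0]; ring
      · exact hqc
      · show d = q * cθ * d; rw [hq1, hcθ1]; ring
  · -- c ≠ 0
    have hsne : Real.sin θ ≠ 0 := by
      rw [hsin]
      simpa using norm_ne_zero_iff.mpr hczero
    have hsneC : sθ ≠ 0 := by rw [hsθ]; exact Complex.ofReal_ne_zero.mpr hsne
    set t : ℂ := -(conj p) * b / sθ with htdef
    have htb : b = -(p * sθ * t) := by
      rw [htdef]
      rw [show -(p * sθ * (-(conj p) * b / sθ)) = (p * conj p * b) * (sθ / sθ) by ring]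
      rw [div_self hsneC, hpu, one_mul, mul_one]
    have h01' : conj p * cθ * b + conj q * sθ * d = 0 := by
      have e1 : conj a = conj p * cθ := by
        rw [hpa, _root_.map_mul, hcθ, Complex.conj_ofReal]
      have e2 : conj c = conj q * sθ := by
        rw [hqc, _root_.map_mul, hsθ, Complex.conj_ofReal]
      calc conj p * cθ * b + conj q * sθ * d
          = conj a * b + conj c * d := by rw [e1, e2]
        _ = 0 := h01
    have h2 : conj q * d = -(conj p) * cθ * b / sθ := by
      field_simp
      linear_combination h01'
    have htd : d = q * cθ * t := by
      rw [htdef]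
      rw [show q * cθ * (-(conj p) * b / sθ) = q * (-(conj p) * cθ * b / sθ) by ring]
      rw [← h2, show q * (conj q * d) = (q * conj q) * d by ring, hqu, one_mul]
    have htu : t * conj t = 1 := by
      have h11' := h11
      rw [htb, htd] at h11'
      simp only [map_neg, _root_.map_mul, hconjc, hconjs] at h11'
      linear_combination h11' - (sθ ^ 2 * (t * conj t)) * hpu
        - (cθ ^ 2 * (t * conj t)) * hqu - (t * conj t) * hsc
    refine ⟨p, q, t, θ, hpu, hqu, htu, ?_⟩
    ext i j
    fin_cases i <;> fin_cases j <;>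
      simp only [Matrix.of_apply, Matrix.cons_val', Matrix.cons_val_zero,
        Matrix.cons_val_one, Matrix.head_cons, Matrix.head_fin_const,
        Matrix.empty_val', Matrix.cons_val_fin_one]
    · exact hpa
    · exact htb
    · exact hqc
    · exact htd

lemma Pg_Cg (V : Matrix (Fin 2) (Fin 2) ℂ) (hV : Vᴴ * V = 1) : Pg (Cg V) := by
  obtain ⟨p, q, t, θ, hpu, hqu, htu, hVeq⟩ := euler V hV
  set w : ℂ := (p * q * t) ^ (((2 : ℕ) : ℂ)⁻¹) with hwdef
  have hw2 : w ^ 2 = p * q * t := Complex.cpow_nat_inv_pow _ (by norm_num)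
  have hww : w * conj w = 1 := by
    have h1 : Complex.normSq w ^ 2 = 1 := by
      have : ((Complex.normSq w ^ 2 : ℝ) : ℂ) = 1 := by
        push_cast
        rw [← Complex.mul_conj]
        calc (w * conj w) ^ 2 = (w ^ 2) * conj (w ^ 2) := by rw [map_pow]; ring
          _ = (p * q * t) * conj (p * q * t) := by rw [hw2]
          _ = (p * conj p) * (q * conj q) * (t * conj t) := by
              simp only [_root_.map_mul]; ring
          _ = 1 := by rw [hpu, hqu, htu]; ring
      exact_mod_cast this
    have h2 : Complex.normSq w = 1 := by nlinarith [Complex.normSq_nonneg w]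
    rw [Complex.mul_conj, h2]
    simp
  set c' : ℂ := ((Real.cos (θ/2) : ℝ) : ℂ) with hc'def
  set s' : ℂ := ((Real.sin (θ/2) : ℝ) : ℂ) with hs'def
  have hc' : conj c' = c' := by rw [hc'def]; exact Complex.conj_ofReal _
  have hs' : conj s' = s' := by rw [hs'def]; exact Complex.conj_ofReal _
  have hcs : c' ^ 2 + s' ^ 2 = 1 := by
    rw [hc'def, hs'def]
    exact_mod_cast Real.cos_sq_add_sin_sq (θ/2)
  have hcos2 : ((Real.cos θ : ℝ) : ℂ) = c' ^ 2 - s' ^ 2 := by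
    have h : Real.cos θ = Real.cos (θ/2) ^ 2 - Real.sin (θ/2) ^ 2 := by
      conv_lhs => rw [show θ = θ/2 + θ/2 by ring]
      rw [Real.cos_add]; ring
    rw [hc'def, hs'def, h]; push_cast; ring
  have hsin2 : ((Real.sin θ : ℝ) : ℂ) = 2 * c' * s' := by
    have h : Real.sin θ = 2 * Real.cos (θ/2) * Real.sin (θ/2) := by
      conv_lhs => rw [show θ = θ/2 + θ/2 by ring]
      rw [Real.sin_add]; ring
    rw [hc'def, hs'def, h]; push_cast; ring
  have habc := abc_core p q t w c' s' hpu hqu htu hww hw2 hc' hs' hcs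
  have hmat : (!![p * Real.cos θ, -(p * Real.sin θ * t);
             q * Real.sin θ, q * Real.cos θ * t] : Matrix (Fin 2) (Fin 2) ℂ)
      = !![p * (c'^2 - s'^2), -(p * (2*c'*s') * t);
           q * (2*c'*s'), q * (c'^2 - s'^2) * t] := by
    rw [hcos2, hsin2]
  rw [hVeq, hmat]
  exact habc

end euler
section structure_lemmas
set_option maxHeartbeats 1600000

def X2 : Matrix (Fin 2) (Fin 2) ℂ := !![0,1;1,0]

lemma hX2u : X2ᴴ * X2 = 1 := by
  ext i j
  fin_cases i <;> fin_cases j <;>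
    simp [X2, Matrix.conjTranspose_apply, Matrix.mul_apply, Fin.sum_univ_two, Matrix.one_apply]

lemma rC_generic (h : ℂ) (hh : h ^ 2 = 1/2) :
    kron !![h,h;h,-h] !![h,h;h,-h] * (CNOT * kron !![h,h;h,-h] !![h,h;h,-h]) = rC := by
  ext ⟨a,b⟩ ⟨c,d⟩
  fin_cases a <;> fin_cases b <;> fin_cases c <;> fin_cases d <;>
    simp [kron, CNOT, rC, Matrix.mul_apply, Fintype.sum_prod_type, Fin.sum_univ_two,
      Prod.ext_iff]
  all_goals
    first
      | ring1
      | linear_combination (4*h^2 + 2) * hh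
      | linear_combination (-(4*h^2) - 2) * hh

noncomputable def hC : ℂ := (Real.sqrt 2 : ℂ)⁻¹

lemma sq2_sq : ((Real.sqrt 2 : ℝ) : ℂ) ^ 2 = 2 := by
  have h : (Real.sqrt 2 : ℝ) ^ 2 = 2 := Real.sq_sqrt (by norm_num)
  exact_mod_cast congrArg (fun x : ℝ => (x : ℂ)) h

lemma sq2_ne : ((Real.sqrt 2 : ℝ) : ℂ) ≠ 0 := by
  have : (Real.sqrt 2 : ℝ) ≠ 0 := by positivity
  exact_mod_cast Complex.ofReal_ne_zero.mpr this

lemma hC_sq : hC ^ 2 = 1/2 := by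
  rw [hC, inv_pow, sq2_sq]
  norm_num

noncomputable def Hm : Matrix (Fin 2) (Fin 2) ℂ := !![hC,hC;hC,-hC]

lemma hHu : Hmᴴ * Hm = 1 := by
  ext i j
  fin_cases i <;> fin_cases j <;>
    simp [Hm, hC, Matrix.conjTranspose_apply, Matrix.mul_apply, Fin.sum_univ_two,
      Matrix.one_apply, Complex.conj_ofReal, map_inv₀]
  all_goals try field_simp [sq2_ne]
  all_goals
    first
      | ring1
      | linear_combination sq2_sq
      | linear_combination -sq2_sq
      | linear_combination 2*sq2_sq
      | linear_combination (-2)*sq2_sq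

lemma Pg_rC : Pg rC := by
  rw [← rC_generic hC hC_sq, ← kron_mul_kron]
  exact Pg_mul (Pg_mul (Pg_kronL Hm hHu) (Pg_kronR Hm hHu))
    (Pg_mul Pg_CNOT (Pg_mul (Pg_kronL Hm hHu) (Pg_kronR Hm hHu)))

lemma SWAP_eq : CNOT * (rC * CNOT) = SWAP := by
  ext ⟨a,b⟩ ⟨c,d⟩
  fin_cases a <;> fin_cases b <;> fin_cases c <;> fin_cases d <;>
    simp [CNOT, rC, SWAP, Matrix.mul_apply, Fintype.sum_prod_type, Fin.sum_univ_two,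
      Prod.ext_iff]

lemma Pg_SWAP : Pg SWAP := by
  rw [← SWAP_eq]
  exact Pg_mul Pg_CNOT (Pg_mul Pg_rC Pg_CNOT)

lemma T01_eq (V : Matrix (Fin 2) (Fin 2) ℂ) : kron X2 1 * (Cg V * kron X2 1) = T01 V := by
  ext ⟨a,b⟩ ⟨c,d⟩
  fin_cases a <;> fin_cases b <;> fin_cases c <;> fin_cases d <;>
    simp [kron, X2, Cg, T01, Matrix.mul_apply, Fintype.sum_prod_type, Fin.sum_univ_two,
      Matrix.one_apply, Prod.ext_iff]

lemma T13_eq (V : Matrix (Fin 2) (Fin 2) ℂ) : SWAP * (Cg V * SWAP) = T13 V := by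
  ext ⟨a,b⟩ ⟨c,d⟩
  fin_cases a <;> fin_cases b <;> fin_cases c <;> fin_cases d <;>
    simp [SWAP, Cg, T13, Matrix.mul_apply, Fintype.sum_prod_type, Fin.sum_univ_two,
      Prod.ext_iff]

lemma T02_eq (V : Matrix (Fin 2) (Fin 2) ℂ) : kron 1 X2 * (T13 V * kron 1 X2) = T02 V := by
  ext ⟨a,b⟩ ⟨c,d⟩
  fin_cases a <;> fin_cases b <;> fin_cases c <;> fin_cases d <;>
    simp [kron, X2, T13, T02, Matrix.mul_apply, Fintype.sum_prod_type, Fin.sum_univ_two,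
      Matrix.one_apply, Prod.ext_iff]

lemma Pg_T01 (V : Matrix (Fin 2) (Fin 2) ℂ) (hV : Vᴴ * V = 1) : Pg (T01 V) := by
  rw [← T01_eq]
  exact Pg_mul (Pg_kronL X2 hX2u) (Pg_mul (Pg_Cg V hV) (Pg_kronL X2 hX2u))

lemma Pg_T13 (V : Matrix (Fin 2) (Fin 2) ℂ) (hV : Vᴴ * V = 1) : Pg (T13 V) := by
  rw [← T13_eq]
  exact Pg_mul Pg_SWAP (Pg_mul (Pg_Cg V hV) Pg_SWAP)

lemma Pg_T02 (V : Matrix (Fin 2) (Fin 2) ℂ) (hV : Vᴴ * V = 1) : Pg (T02 V) := by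
  rw [← T02_eq]
  exact Pg_mul (Pg_kronR X2 hX2u) (Pg_mul (Pg_T13 V hV) (Pg_kronR X2 hX2u))

-- row actions
lemma Cg_act (V : Matrix (Fin 2) (Fin 2) ℂ) (M : Matrix (Fin 2 × Fin 2) (Fin 2 × Fin 2) ℂ)
    (p q : Fin 2 × Fin 2) :
    (Cg V * M) p q =
      if p.1 = 1 then V p.2 0 * M (1,0) q + V p.2 1 * M (1,1) q else M p q := by
  obtain ⟨a,b⟩ := p
  fin_cases a <;> fin_cases b <;>
    simp [Cg, Matrix.mul_apply, Fintype.sum_prod_type, Fin.sum_univ_two, Prod.ext_iff]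

lemma T01_act (V : Matrix (Fin 2) (Fin 2) ℂ) (M : Matrix (Fin 2 × Fin 2) (Fin 2 × Fin 2) ℂ)
    (p q : Fin 2 × Fin 2) :
    (T01 V * M) p q =
      if p.1 = 0 then V p.2 0 * M (0,0) q + V p.2 1 * M (0,1) q else M p q := by
  obtain ⟨a,b⟩ := p
  fin_cases a <;> fin_cases b <;>
    simp [T01, Matrix.mul_apply, Fintype.sum_prod_type, Fin.sum_univ_two, Prod.ext_iff]

lemma T13_act (V : Matrix (Fin 2) (Fin 2) ℂ) (M : Matrix (Fin 2 × Fin 2) (Fin 2 × Fin 2) ℂ)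
    (p q : Fin 2 × Fin 2) :
    (T13 V * M) p q =
      if p.2 = 1 then V p.1 0 * M (0,1) q + V p.1 1 * M (1,1) q else M p q := by
  obtain ⟨a,b⟩ := p
  fin_cases a <;> fin_cases b <;>
    simp [T13, Matrix.mul_apply, Fintype.sum_prod_type, Fin.sum_univ_two, Prod.ext_iff]

lemma T02_act (V : Matrix (Fin 2) (Fin 2) ℂ) (M : Matrix (Fin 2 × Fin 2) (Fin 2 × Fin 2) ℂ)
    (p q : Fin 2 × Fin 2) :
    (T02 V * M) p q =
      if p.2 = 0 then V p.1 0 * M (0,0) q + V p.1 1 * M (1,0) q else M p q := by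
  obtain ⟨a,b⟩ := p
  fin_cases a <;> fin_cases b <;>
    simp [T02, Matrix.mul_apply, Fintype.sum_prod_type, Fin.sum_univ_two, Prod.ext_iff]

-- cancellation and unitarity propagation
lemma Cg_cancel (V : Matrix (Fin 2) (Fin 2) ℂ) (hV : Vᴴ * V = 1)
    (M : Matrix (Fin 2 × Fin 2) (Fin 2 × Fin 2) ℂ) : Cg Vᴴ * (Cg V * M) = M := by
  rw [← mul_assoc, Cg_mul, hV, Cg_one, one_mul]

lemma T01_cancel (V : Matrix (Fin 2) (Fin 2) ℂ) (hV : Vᴴ * V = 1)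
    (M : Matrix (Fin 2 × Fin 2) (Fin 2 × Fin 2) ℂ) : T01 Vᴴ * (T01 V * M) = M := by
  rw [← mul_assoc, T01_mul, hV, T01_one, one_mul]

lemma T13_cancel (V : Matrix (Fin 2) (Fin 2) ℂ) (hV : Vᴴ * V = 1)
    (M : Matrix (Fin 2 × Fin 2) (Fin 2 × Fin 2) ℂ) : T13 Vᴴ * (T13 V * M) = M := by
  rw [← mul_assoc, T13_mul, hV, T13_one, one_mul]

lemma T02_cancel (V : Matrix (Fin 2) (Fin 2) ℂ) (hV : Vᴴ * V = 1)
    (M : Matrix (Fin 2 × Fin 2) (Fin 2 × Fin 2) ℂ) : T02 Vᴴ * (T02 V * M) = M := by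
  rw [← mul_assoc, T02_mul, hV, T02_one, one_mul]

lemma Cg_unit (V : Matrix (Fin 2) (Fin 2) ℂ) (hV : Vᴴ * V = 1)
    (M : Matrix (Fin 2 × Fin 2) (Fin 2 × Fin 2) ℂ) (hM : Mᴴ * M = 1) :
    (Cg V * M)ᴴ * (Cg V * M) = 1 := by
  rw [Matrix.conjTranspose_mul, Cg_adj, mul_assoc, Cg_cancel V hV M, hM]

lemma T01_unit (V : Matrix (Fin 2) (Fin 2) ℂ) (hV : Vᴴ * V = 1)
    (M : Matrix (Fin 2 × Fin 2) (Fin 2 × Fin 2) ℂ) (hM : Mᴴ * M = 1) :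
    (T01 V * M)ᴴ * (T01 V * M) = 1 := by
  rw [Matrix.conjTranspose_mul, T01_adj, mul_assoc, T01_cancel V hV M, hM]

lemma T13_unit (V : Matrix (Fin 2) (Fin 2) ℂ) (hV : Vᴴ * V = 1)
    (M : Matrix (Fin 2 × Fin 2) (Fin 2 × Fin 2) ℂ) (hM : Mᴴ * M = 1) :
    (T13 V * M)ᴴ * (T13 V * M) = 1 := by
  rw [Matrix.conjTranspose_mul, T13_adj, mul_assoc, T13_cancel V hV M, hM]

lemma T02_unit (V : Matrix (Fin 2) (Fin 2) ℂ) (hV : Vᴴ * V = 1)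
    (M : Matrix (Fin 2 × Fin 2) (Fin 2 × Fin 2) ℂ) (hM : Mᴴ * M = 1) :
    (T02 V * M)ᴴ * (T02 V * M) = 1 := by
  rw [Matrix.conjTranspose_mul, T02_adj, mul_assoc, T02_cancel V hV M, hM]

lemma unit_adj {V : Matrix (Fin 2) (Fin 2) ℂ} (hV : Vᴴ * V = 1) : (Vᴴ)ᴴ * Vᴴ = 1 := by
  rw [Matrix.conjTranspose_conjTranspose]
  exact mul_eq_one_comm.mp hV

-- Givens rotations
lemma givens_bot (x y : ℂ) : ∃ V : Matrix (Fin 2) (Fin 2) ℂ, Vᴴ * V = 1 ∧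
    V 1 0 * x + V 1 1 * y = 0 ∧ ∃ n : ℝ, 0 ≤ n ∧ V 0 0 * x + V 0 1 * y = (n : ℂ) := by
  by_cases h : x = 0 ∧ y = 0
  · exact ⟨1, by simp, by simp [Matrix.one_apply, h.1, h.2], 0, le_refl 0,
      by simp [Matrix.one_apply, h.1, h.2]⟩
  · set n : ℝ := Real.sqrt (Complex.normSq x + Complex.normSq y) with hn
    have hpos : 0 < Complex.normSq x + Complex.normSq y := by
      rcases not_and_or.mp h with h' | h'
      · have := Complex.normSq_pos.mpr h'
        nlinarith [Complex.normSq_nonneg y]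
      · have := Complex.normSq_pos.mpr h'
        nlinarith [Complex.normSq_nonneg x]
    have hnpos : 0 < n := Real.sqrt_pos.mpr hpos
    have hnne : (n:ℂ) ≠ 0 := Complex.ofReal_ne_zero.mpr hnpos.ne'
    have hn2 : ((n:ℂ))^2 = conj x * x + conj y * y := by
      have hr : n^2 = Complex.normSq x + Complex.normSq y := Real.sq_sqrt hpos.le
      calc ((n:ℂ))^2 = ((n^2 : ℝ) : ℂ) := by push_cast; ring
        _ = ((Complex.normSq x + Complex.normSq y : ℝ) : ℂ) := by rw [hr]
        _ = conj x * x + conj y * y := by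
            rw [Complex.ofReal_add, ← Complex.mul_conj, ← Complex.mul_conj]; ring
    refine ⟨!![conj x / n, conj y / n; -(y/n), x/n], ?_, ?_, n, hnpos.le, ?_⟩
    · ext i j
      fin_cases i <;> fin_cases j <;>
        simp [Matrix.conjTranspose_apply, Matrix.mul_apply, Fin.sum_univ_two,
          Matrix.one_apply, map_div₀, Complex.conj_ofReal, Complex.conj_conj, map_neg]
      all_goals try field_simp
      all_goals
        first
          | ring1
          | linear_combination hn2
          | linear_combination -hn2
          | linear_combination 2*hn2
          | linear_combination (-2)*hn2
    · simp
      ring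
    · simp
      field_simp
      first
        | linear_combination hn2
        | linear_combination -hn2
        | linear_combination 2*hn2
        | linear_combination (-2)*hn2
  
lemma givens_top (x y : ℂ) : ∃ V : Matrix (Fin 2) (Fin 2) ℂ, Vᴴ * V = 1 ∧
    V 0 0 * x + V 0 1 * y = 0 := by
  by_cases h : x = 0 ∧ y = 0
  · exact ⟨1, by simp, by simp [Matrix.one_apply, h.1, h.2]⟩
  · set n : ℝ := Real.sqrt (Complex.normSq x + Complex.normSq y) with hn
    have hpos : 0 < Complex.normSq x + Complex.normSq y := by
      rcases not_and_or.mp h with h' | h'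
      · have := Complex.normSq_pos.mpr h'
        nlinarith [Complex.normSq_nonneg y]
      · have := Complex.normSq_pos.mpr h'
        nlinarith [Complex.normSq_nonneg x]
    have hnpos : 0 < n := Real.sqrt_pos.mpr hpos
    have hnne : (n:ℂ) ≠ 0 := Complex.ofReal_ne_zero.mpr hnpos.ne'
    have hn2 : ((n:ℂ))^2 = conj x * x + conj y * y := by
      have hr : n^2 = Complex.normSq x + Complex.normSq y := Real.sq_sqrt hpos.le
      calc ((n:ℂ))^2 = ((n^2 : ℝ) : ℂ) := by push_cast; ring
        _ = ((Complex.normSq x + Complex.normSq y : ℝ) : ℂ) := by rw [hr]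
        _ = conj x * x + conj y * y := by
            rw [Complex.ofReal_add, ← Complex.mul_conj, ← Complex.mul_conj]; ring
    refine ⟨!![-(y/n), x/n; conj x / n, conj y / n], ?_, ?_⟩
    · ext i j
      fin_cases i <;> fin_cases j <;>
        simp [Matrix.conjTranspose_apply, Matrix.mul_apply, Fin.sum_univ_two,
          Matrix.one_apply, map_div₀, Complex.conj_ofReal, Complex.conj_conj, map_neg]
      all_goals try field_simp
      all_goals
        first
          | ring1
          | linear_combination hn2
          | linear_combination -hn2
          | linear_combination 2*hn2
          | linear_combination (-2)*hn2
    · simp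
      ring

end structure_lemmas
section main
set_option maxHeartbeats 3200000

-- specialized row-action lemmas
lemma Cg_act1 (V : Matrix (Fin 2) (Fin 2) ℂ) (M : Matrix (Fin 2 × Fin 2) (Fin 2 × Fin 2) ℂ)
    (b : Fin 2) (q : Fin 2 × Fin 2) :
    (Cg V * M) (1, b) q = V b 0 * M (1,0) q + V b 1 * M (1,1) q := by
  rw [Cg_act]; exact if_pos rfl

lemma Cg_act0 (V : Matrix (Fin 2) (Fin 2) ℂ) (M : Matrix (Fin 2 × Fin 2) (Fin 2 × Fin 2) ℂ)
    (b : Fin 2) (q : Fin 2 × Fin 2) :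
    (Cg V * M) (0, b) q = M (0, b) q := by
  rw [Cg_act]; exact if_neg (by simp)

lemma T01_act0 (V : Matrix (Fin 2) (Fin 2) ℂ) (M : Matrix (Fin 2 × Fin 2) (Fin 2 × Fin 2) ℂ)
    (b : Fin 2) (q : Fin 2 × Fin 2) :
    (T01 V * M) (0, b) q = V b 0 * M (0,0) q + V b 1 * M (0,1) q := by
  rw [T01_act]; exact if_pos rfl

lemma T01_act1 (V : Matrix (Fin 2) (Fin 2) ℂ) (M : Matrix (Fin 2 × Fin 2) (Fin 2 × Fin 2) ℂ)
    (b : Fin 2) (q : Fin 2 × Fin 2) :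
    (T01 V * M) (1, b) q = M (1, b) q := by
  rw [T01_act]; exact if_neg (by simp)

lemma T13_act1 (V : Matrix (Fin 2) (Fin 2) ℂ) (M : Matrix (Fin 2 × Fin 2) (Fin 2 × Fin 2) ℂ)
    (a : Fin 2) (q : Fin 2 × Fin 2) :
    (T13 V * M) (a, 1) q = V a 0 * M (0,1) q + V a 1 * M (1,1) q := by
  rw [T13_act]; exact if_pos rfl

lemma T13_act0 (V : Matrix (Fin 2) (Fin 2) ℂ) (M : Matrix (Fin 2 × Fin 2) (Fin 2 × Fin 2) ℂ)
    (a : Fin 2) (q : Fin 2 × Fin 2) :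
    (T13 V * M) (a, 0) q = M (a, 0) q := by
  rw [T13_act]; exact if_neg (by simp)

lemma T02_act0 (V : Matrix (Fin 2) (Fin 2) ℂ) (M : Matrix (Fin 2 × Fin 2) (Fin 2 × Fin 2) ℂ)
    (a : Fin 2) (q : Fin 2 × Fin 2) :
    (T02 V * M) (a, 0) q = V a 0 * M (0,0) q + V a 1 * M (1,0) q := by
  rw [T02_act]; exact if_pos rfl

lemma T02_act1 (V : Matrix (Fin 2) (Fin 2) ℂ) (M : Matrix (Fin 2 × Fin 2) (Fin 2 × Fin 2) ℂ)
    (a : Fin 2) (q : Fin 2 × Fin 2) :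
    (T02 V * M) (a, 1) q = M (a, 1) q := by
  rw [T02_act]; exact if_neg (by simp)

lemma col_sum {M : Matrix (Fin 2 × Fin 2) (Fin 2 × Fin 2) ℂ} (hM : Mᴴ * M = 1)
    (j k : Fin 2 × Fin 2) :
    conj (M (0,0) j) * M (0,0) k + conj (M (0,1) j) * M (0,1) k
      + conj (M (1,0) j) * M (1,0) k + conj (M (1,1) j) * M (1,1) k
      = if j = k then 1 else 0 := by
  have h := congrFun (congrFun hM j) k
  rw [Matrix.mul_apply] at h
  rw [show ∀ z : Fin 2 × Fin 2 → ℂ, ∑ i, z i = z (0,0) + z (0,1) + z (1,0) + z (1,1) by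
    intro z
    rw [Fintype.sum_prod_type]
    simp [Fin.sum_univ_two]
    ring] at h
  simp only [Matrix.conjTranspose_apply, Matrix.one_apply] at h
  exact h

lemma real_unit {n : ℝ} (hnn : 0 ≤ n) (h : conj ((n:ℝ) : ℂ) * ((n:ℝ):ℂ) = 1) :
    ((n:ℝ):ℂ) = 1 := by
  rw [Complex.conj_ofReal] at h
  have h2 : n * n = 1 := by exact_mod_cast h
  rcases mul_self_eq_one_iff.mp h2 with h3 | h3
  · rw [h3]; norm_num
  · linarith

theorem stmt_9 (U : Matrix (Fin 2 × Fin 2) (Fin 2 × Fin 2) ℂ) (hU : Uᴴ * U = 1) :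
    ∃ L : List (Matrix (Fin 2 × Fin 2) (Fin 2 × Fin 2) ℂ),
      (∀ M ∈ L,
        (∃ A : Matrix (Fin 2) (Fin 2) ℂ, Aᴴ * A = 1 ∧ M = kron A 1) ∨
        (∃ B : Matrix (Fin 2) (Fin 2) ℂ, Bᴴ * B = 1 ∧ M = kron 1 B) ∨
        M = CNOT) ∧
      L.prod = U := by
  -- Step 1 : clear entry ((1,1),(0,0)) with a controlled gate (rows (1,0),(1,1))
  obtain ⟨V1, hV1u, hV1z, -⟩ := givens_bot (U (1,0) (0,0)) (U (1,1) (0,0))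
  obtain ⟨M1, hM1⟩ : ∃ M, M = Cg V1 * U := ⟨_, rfl⟩
  have hM1u : M1ᴴ * M1 = 1 := by rw [hM1]; exact Cg_unit V1 hV1u U hU
  have z1 : M1 (1,1) (0,0) = 0 := by rw [hM1, Cg_act1]; exact hV1z
  -- Step 2 : clear entry ((1,0),(0,0)) with T02 (rows (0,0),(1,0))
  obtain ⟨V2, hV2u, hV2z, -⟩ := givens_bot (M1 (0,0) (0,0)) (M1 (1,0) (0,0))
  obtain ⟨M2, hM2⟩ : ∃ M, M = T02 V2 * M1 := ⟨_, rfl⟩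
  have hM2u : M2ᴴ * M2 = 1 := by rw [hM2]; exact T02_unit V2 hV2u M1 hM1u
  have z2 : M2 (1,0) (0,0) = 0 := by rw [hM2, T02_act0]; exact hV2z
  have z1' : M2 (1,1) (0,0) = 0 := by rw [hM2, T02_act1]; exact z1
  -- Step 3 : clear entry ((0,1),(0,0)) with T01 (rows (0,0),(0,1))
  obtain ⟨V3, hV3u, hV3z, n3, hn3nn, hV3n⟩ := givens_bot (M2 (0,0) (0,0)) (M2 (0,1) (0,0))
  obtain ⟨M3, hM3⟩ : ∃ M, M = T01 V3 * M2 := ⟨_, rfl⟩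
  have hM3u : M3ᴴ * M3 = 1 := by rw [hM3]; exact T01_unit V3 hV3u M2 hM2u
  have z3 : M3 (0,1) (0,0) = 0 := by rw [hM3, T01_act0]; exact hV3z
  have z2' : M3 (1,0) (0,0) = 0 := by rw [hM3, T01_act1]; exact z2
  have z1'' : M3 (1,1) (0,0) = 0 := by rw [hM3, T01_act1]; exact z1'
  have d3 : M3 (0,0) (0,0) = ((n3:ℝ):ℂ) := by rw [hM3, T01_act0]; exact hV3n
  -- column (0,0) has norm 1, so n3 = 1 and row (0,0) vanishes off the corner
  have hd3 : M3 (0,0) (0,0) = 1 := by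
    have h := col_sum hM3u (0,0) (0,0)
    rw [z3, z2', z1'', d3] at h
    simp at h
    rw [d3]
    exact real_unit hn3nn (by rw [Complex.conj_ofReal]; exact_mod_cast h)
  have r01 : M3 (0,0) (0,1) = 0 := by
    have h := col_sum hM3u (0,0) (0,1)
    rw [z3, z2', z1'', hd3] at h
    simpa using h
  have r02 : M3 (0,0) (1,0) = 0 := by
    have h := col_sum hM3u (0,0) (1,0)
    rw [z3, z2', z1'', hd3] at h
    simpa using h
  have r03 : M3 (0,0) (1,1) = 0 := by
    have h := col_sum hM3u (0,0) (1,1)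
    rw [z3, z2', z1'', hd3] at h
    simpa using h
  -- Step 4 : clear entry ((1,0),(0,1)) with a controlled gate (zero the top of the pair)
  obtain ⟨V4, hV4u, hV4z⟩ := givens_top (M3 (1,0) (0,1)) (M3 (1,1) (0,1))
  obtain ⟨M4, hM4⟩ : ∃ M, M = Cg V4 * M3 := ⟨_, rfl⟩
  have hM4u : M4ᴴ * M4 = 1 := by rw [hM4]; exact Cg_unit V4 hV4u M3 hM3u
  have z4 : M4 (1,0) (0,1) = 0 := by rw [hM4, Cg_act1]; exact hV4z
  have c41 : M4 (1,0) (0,0) = 0 := by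
    rw [hM4, Cg_act1, z2', z1'']; ring
  have c42 : M4 (1,1) (0,0) = 0 := by
    rw [hM4, Cg_act1, z2', z1'']; ring
  have r4 : ∀ b q, M4 (0, b) q = M3 (0, b) q := fun b q => by rw [hM4, Cg_act0]
  -- Step 5 : clear entry ((1,1),(0,1)) with T13 (rows (0,1),(1,1))
  obtain ⟨V5, hV5u, hV5z, n5, hn5nn, hV5n⟩ := givens_bot (M4 (0,1) (0,1)) (M4 (1,1) (0,1))
  obtain ⟨M5, hM5⟩ : ∃ M, M = T13 V5 * M4 := ⟨_, rfl⟩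
  have hM5u : M5ᴴ * M5 = 1 := by rw [hM5]; exact T13_unit V5 hV5u M4 hM4u
  have z5 : M5 (1,1) (0,1) = 0 := by rw [hM5, T13_act1]; exact hV5z
  have d5 : M5 (0,1) (0,1) = ((n5:ℝ):ℂ) := by rw [hM5, T13_act1]; exact hV5n
  have e00 : M5 (0,0) (0,0) = 1 := by rw [hM5, T13_act0, r4]; exact hd3
  have e01 : M5 (0,0) (0,1) = 0 := by rw [hM5, T13_act0, r4]; exact r01
  have e02 : M5 (0,0) (1,0) = 0 := by rw [hM5, T13_act0, r4]; exact r02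
  have e03 : M5 (0,0) (1,1) = 0 := by rw [hM5, T13_act0, r4]; exact r03
  have e20 : M5 (1,0) (0,0) = 0 := by rw [hM5, T13_act0]; exact c41
  have e21 : M5 (1,0) (0,1) = 0 := by rw [hM5, T13_act0]; exact z4
  have e10 : M5 (0,1) (0,0) = 0 := by
    rw [hM5, T13_act1, r4, z3, c42]; ring
  have e30 : M5 (1,1) (0,0) = 0 := by
    rw [hM5, T13_act1, r4, z3, c42]; ring
  -- column (0,1) has norm one, so n5 = 1
  have d5' : M5 (0,1) (0,1) = 1 := by
    have h := col_sum hM5u (0,1) (0,1)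
    rw [e01, z5, e21, d5] at h
    simp at h
    rw [d5]
    exact real_unit hn5nn (by rw [Complex.conj_ofReal]; exact_mod_cast h)
  have e12 : M5 (0,1) (1,0) = 0 := by
    have h := col_sum hM5u (0,1) (1,0)
    rw [e01, z5, e21, d5'] at h
    simpa using h
  have e13 : M5 (0,1) (1,1) = 0 := by
    have h := col_sum hM5u (0,1) (1,1)
    rw [e01, z5, e21, d5'] at h
    simpa using h
  -- the residual 2x2 block
  obtain ⟨W, hWdef⟩ : ∃ W' : Matrix (Fin 2) (Fin 2) ℂ,
      W' = !![M5 (1,0) (1,0), M5 (1,0) (1,1); M5 (1,1) (1,0), M5 (1,1) (1,1)] := ⟨_, rfl⟩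
  have hW : M5 = Cg W := by
    ext ⟨a,b⟩ ⟨c,d⟩
    fin_cases a <;> fin_cases b <;> fin_cases c <;> fin_cases d <;>
      simp only [hWdef, Cg, Matrix.of_apply, Matrix.cons_val', Matrix.cons_val_zero,
        Matrix.cons_val_one, Matrix.head_cons, Matrix.head_fin_const, Matrix.empty_val',
        Matrix.cons_val_fin_one] <;>
      norm_num [Prod.ext_iff]
    all_goals
      first
        | rfl
        | exact e00 | exact e01 | exact e02 | exact e03
        | exact e10 | exact d5' | exact e12 | exact e13
        | exact e20 | exact e21
        | exact e30 | exact z5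
  have hWu : Wᴴ * W = 1 := by
    have q00 := col_sum hM5u (1,0) (1,0)
    have q01 := col_sum hM5u (1,0) (1,1)
    have q10 := col_sum hM5u (1,1) (1,0)
    have q11 := col_sum hM5u (1,1) (1,1)
    rw [e02, e12] at q00 q01
    rw [e03, e13] at q10 q11
    rw [if_pos rfl] at q00
    rw [if_neg (by decide : ¬((1,0) : Fin 2 × Fin 2) = (1,1))] at q01
    rw [if_neg (by decide : ¬((1,1) : Fin 2 × Fin 2) = (1,0))] at q10
    rw [if_pos rfl] at q11
    simp only [map_zero, zero_mul, zero_add, add_zero] at q00 q01 q10 q11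
    ext i j
    fin_cases i <;> fin_cases j <;>
      simp [hWdef, Matrix.conjTranspose_apply, Matrix.mul_apply, Fin.sum_univ_two,
        Matrix.one_apply]
    · linear_combination q00
    · linear_combination q01
    · linear_combination q10
    · linear_combination q11
  -- reassemble
  have hfin : U = Cg V1ᴴ * (T02 V2ᴴ * (T01 V3ᴴ * (Cg V4ᴴ * (T13 V5ᴴ * Cg W)))) := by
    rw [← hW, hM5, T13_cancel V5 hV5u M4, hM4, Cg_cancel V4 hV4u M3, hM3,
      T01_cancel V3 hV3u M2, hM2, T02_cancel V2 hV2u M1, hM1, Cg_cancel V1 hV1u U]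
  have hPg : Pg (Cg V1ᴴ * (T02 V2ᴴ * (T01 V3ᴴ * (Cg V4ᴴ * (T13 V5ᴴ * Cg W))))) :=
    Pg_mul (Pg_Cg _ (unit_adj hV1u))
      (Pg_mul (Pg_T02 _ (unit_adj hV2u))
        (Pg_mul (Pg_T01 _ (unit_adj hV3u))
          (Pg_mul (Pg_Cg _ (unit_adj hV4u))
            (Pg_mul (Pg_T13 _ (unit_adj hV5u)) (Pg_Cg W hWu)))))
  rw [hfin]
  exact hPg

end main
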